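/- For a labeled graph G and a vertex x of degree 3 with label U, the number of dominating sets of G of size i satisfies #ds(G)[i] = #ds(G_in)[i−1] + #ds(G_opt)[i] − #ds(G_forb)[i], where G_in is obtained by deleting x, relabeling U-neighbors of x to C and deleting N-neighbors of x; G_opt is obtained by deleting x; and G_forb is obtained by deleting C-labeled neighbors of x, relabeling remaining neighbors of x to N, and deleting x. -/

import Mathlib

/-- Labels for vertices: `U` (must be dominated, may be in the set),
`N` (must be dominated, may not be in the set), `C` (no restriction on domination,
may be in the set). -/
inductive VLabel : Type
  | U | N | C
deriving DecidableEq

/-- `D` is a dominating set of the labeled graph `(G, W, ℓ)`: `D` consists of vertices of `W`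
not labeled `N`, and every vertex of `W` labeled `U` or `N` is in `D` or has a neighbor
in `D`. -/
def IsLDomSet {V : Type*} (G : SimpleGraph V) (W : Finset V) (ℓ : V → VLabel)
    (D : Finset V) : Prop :=
  D ⊆ W ∧ (∀ v ∈ D, ℓ v ≠ VLabel.N) ∧
    ∀ v ∈ W, (ℓ v = VLabel.U ∨ ℓ v = VLabel.N) → v ∈ D ∨ ∃ u ∈ D, G.Adj u v

open Classical in
/-- The number of dominating sets of size `i` of the labeled graph `(G, W, ℓ)`. -/
noncomputable def dsCount {V : Type*} [DecidableEq V] (G : SimpleGraph V) (W : Finset V)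
    (ℓ : V → VLabel) (i : ℕ) : ℕ :=
  (W.powerset.filter (fun D => IsLDomSet G W ℓ D ∧ D.card = i)).card

/-! Split the dominating sets `D` of `G` according to whether `x ∈ D`. Those containing `x`
correspond, via `D ↦ D \ {x}`, to the dominating sets of `G_in`: `x` already dominates its
neighbours, which therefore become `C`, while its `N`-neighbours can never enter `D`. Those
avoiding `x` are the dominating sets of `G_opt` that dominate `x`. The remaining dominating sets
of `G_opt`, which do not dominate `x`, contain no neighbour of `x`; they are exactly the
dominating sets of `G_forb`, where the neighbours of `x` are relabelled `N` and its `C`-neighbours,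
now without any constraint, are deleted. -/

open Finset

lemma dsCount_eq_card_filter_powerset {V : Type*} [DecidableEq V] {G : SimpleGraph V}
    {W S : Finset V} {ℓ : V → VLabel} {i : ℕ}
    [DecidablePred fun D : Finset V => IsLDomSet G W ℓ D ∧ #D = i] (hWS : W ⊆ S) :
    dsCount G W ℓ i = #{D ∈ S.powerset | IsLDomSet G W ℓ D ∧ #D = i} := by
  rw [dsCount]
  refine card_bij (fun D _ => D) ?_ (fun _ _ _ _ => id) ?_
  · intro D hD
    simp only [mem_filter, mem_powerset] at hD ⊢
    exact ⟨hD.1.trans hWS, hD.2⟩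
  · intro D hD
    simp only [mem_filter, mem_powerset] at hD ⊢
    exact ⟨D, ⟨hD.2.1.1, hD.2⟩, rfl⟩

lemma card_filter_powerset_and_mem {α : Type*} [DecidableEq α] {S : Finset α} {x : α}
    (hx : x ∈ S) (P : Finset α → Prop) [DecidablePred P] :
    #{D ∈ S.powerset | P D ∧ x ∈ D} = #{D ∈ (S.erase x).powerset | P (insert x D)} := by
  refine card_bij' (fun D _ => D.erase x) (fun D _ => insert x D) ?_ ?_ ?_ ?_
  · intro D hD
    simp only [mem_filter, mem_powerset] at hD ⊢
    exact ⟨erase_subset_erase x hD.1, by rw [insert_erase hD.2.2]; exact hD.2.1⟩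
  · intro D hD
    simp only [mem_filter, mem_powerset] at hD ⊢
    exact ⟨insert_subset hx (hD.1.trans (erase_subset x S)), hD.2, mem_insert_self x D⟩
  · intro D hD
    simp only [mem_filter, mem_powerset] at hD
    exact insert_erase hD.2.2
  · intro D hD
    simp only [mem_filter, mem_powerset] at hD
    exact erase_insert fun h => (notMem_erase x S) (hD.1 h)

lemma VLabel.ne_C_iff (l : VLabel) : l ≠ VLabel.C ↔ l = VLabel.U ∨ l = VLabel.N := by
  cases l <;> simp

namespace IsLDomSet

variable {V : Type*} {G : SimpleGraph V} {W D : Finset V} {ℓ : V → VLabel} {x : V}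

lemma insert_iff [DecidableEq V] [DecidableRel G.Adj] (hx : x ∈ W) (hℓx : ℓ x ≠ VLabel.N)
    (hxD : x ∉ D) :
    IsLDomSet G W ℓ (insert x D) ↔
      IsLDomSet G ((W.erase x).filter fun v => ¬(G.Adj x v ∧ ℓ v = VLabel.N))
        (fun v => if G.Adj x v ∧ ℓ v = VLabel.U then VLabel.C else ℓ v) D := by
  constructor
  · rintro ⟨hDW, hN, hdom⟩
    have hDW' : D ⊆ (W.erase x).filter fun v => ¬(G.Adj x v ∧ ℓ v = VLabel.N) := by
      intro v hv
      have hvx : v ≠ x := fun h => hxD (h ▸ hv)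
      simp only [mem_filter, mem_erase]
      exact ⟨⟨hvx, hDW (mem_insert_of_mem hv)⟩, fun h => hN v (mem_insert_of_mem hv) h.2⟩
    refine ⟨hDW', fun v hv => ?_, fun v hv hlab => ?_⟩
    · dsimp only
      split_ifs
      · exact VLabel.noConfusion
      · exact hN v (mem_insert_of_mem hv)
    · simp only [mem_filter, mem_erase] at hv
      obtain ⟨⟨hvx, hvW⟩, hnotN⟩ := hv
      have hnotU : ¬(G.Adj x v ∧ ℓ v = VLabel.U) := fun h => by simp [h] at hlab
      simp only [hnotU, if_false] at hlab ⊢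
      have hnadj : ¬G.Adj x v := fun h =>
        hlab.elim (fun hU => hnotU ⟨h, hU⟩) (fun hN => hnotN ⟨h, hN⟩)
      rcases hdom v hvW hlab with h | ⟨u, hu, huv⟩
      · exact .inl ((mem_insert.mp h).resolve_left hvx)
      · rcases mem_insert.mp hu with rfl | hu
        · exact absurd huv hnadj
        · exact .inr ⟨u, hu, huv⟩
  · rintro ⟨hDW, hN, hdom⟩
    have hDW' : D ⊆ W := hDW.trans ((filter_subset _ _).trans (erase_subset x W))
    refine ⟨insert_subset hx hDW', fun v hv => ?_, fun v hv hlab => ?_⟩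
    · rcases mem_insert.mp hv with rfl | hv
      · exact hℓx
      · have := hN v hv
        dsimp only at this
        split_ifs at this with h
        · rw [h.2]; exact VLabel.noConfusion
        · exact this
    · by_cases hvx : v = x
      · exact .inl (hvx ▸ mem_insert_self x D)
      by_cases hadj : G.Adj x v
      · exact .inr ⟨x, mem_insert_self x D, hadj⟩
      have hvW' : v ∈ (W.erase x).filter fun v => ¬(G.Adj x v ∧ ℓ v = VLabel.N) :=
        mem_filter.mpr ⟨mem_erase.mpr ⟨hvx, hv⟩, fun h => hadj h.1⟩
      rcases hdom v hvW' (by simpa [hadj] using hlab) with h | ⟨u, hu, huv⟩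
      · exact .inl (mem_insert_of_mem h)
      · exact .inr ⟨u, mem_insert_of_mem hu, huv⟩

lemma notMem_and_iff [DecidableEq V] (hx : x ∈ W) (hℓx : ℓ x ≠ VLabel.C) :
    x ∉ D ∧ IsLDomSet G W ℓ D ↔ IsLDomSet G (W.erase x) ℓ D ∧ ∃ u ∈ D, G.Adj u x := by
  constructor
  · rintro ⟨hxD, hDW, hN, hdom⟩
    refine ⟨⟨fun v hv => mem_erase.mpr ⟨fun h => hxD (h ▸ hv), hDW hv⟩, hN,
      fun v hv => hdom v (mem_of_mem_erase hv)⟩, ?_⟩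
    exact (hdom x hx ((VLabel.ne_C_iff _).mp hℓx)).resolve_left hxD
  · rintro ⟨⟨hDW, hN, hdom⟩, hxdom⟩
    refine ⟨fun h => notMem_erase x W (hDW h), hDW.trans (erase_subset x W), hN,
      fun v hv hlab => ?_⟩
    by_cases hvx : v = x
    · exact .inr (hvx ▸ hxdom)
    · exact hdom v (mem_erase.mpr ⟨hvx, hv⟩) hlab

lemma and_not_adj_iff [DecidableRel G.Adj] :
    (IsLDomSet G W ℓ D ∧ ¬∃ u ∈ D, G.Adj u x) ↔
      IsLDomSet G (W.filter fun v => ¬(G.Adj x v ∧ ℓ v = VLabel.C))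
        (fun v => if G.Adj x v then VLabel.N else ℓ v) D := by
  constructor
  · rintro ⟨⟨hDW, hN, hdom⟩, hxdom⟩
    have hnadj : ∀ v ∈ D, ¬G.Adj x v := fun v hv h => hxdom ⟨v, hv, G.adj_symm h⟩
    refine ⟨fun v hv => mem_filter.mpr ⟨hDW hv, fun h => hnadj v hv h.1⟩,
      fun v hv => by simpa [hnadj v hv] using hN v hv, fun v hv hlab => ?_⟩
    obtain ⟨hvW, hnotC⟩ := mem_filter.mp hv
    by_cases hadj : G.Adj x v
    · exact hdom v hvW ((VLabel.ne_C_iff _).mp fun h => hnotC ⟨hadj, h⟩)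
    · exact hdom v hvW (by simpa [hadj] using hlab)
  · rintro ⟨hDW, hN, hdom⟩
    have hnadj : ∀ v ∈ D, ¬G.Adj x v := fun v hv h => hN v hv (by simp [h])
    refine ⟨⟨hDW.trans (filter_subset _ _), fun v hv => by simpa [hnadj v hv] using hN v hv,
      fun v hv hlab => ?_⟩, fun ⟨u, hu, hux⟩ => hnadj u hu (G.adj_symm hux)⟩
    have hnotC : ℓ v ≠ VLabel.C := (VLabel.ne_C_iff _).mpr hlab
    refine hdom v (mem_filter.mpr ⟨hv, fun h => hnotC h.2⟩) ?_
    dsimp only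
    split_ifs <;> simp [hlab]

end IsLDomSet

section Counting

variable {V : Type*} [DecidableEq V] {G : SimpleGraph V} [DecidableRel G.Adj]
  {W : Finset V} {ℓ : V → VLabel} {x : V} {i : ℕ}

open Classical in
lemma card_filter_isLDomSet_and_mem (hx : x ∈ W) (hℓx : ℓ x ≠ VLabel.N) (hi : 1 ≤ i) :
    #{D ∈ W.powerset | (IsLDomSet G W ℓ D ∧ #D = i) ∧ x ∈ D} =
      dsCount G ((W.erase x).filter fun v => ¬(G.Adj x v ∧ ℓ v = VLabel.N))
        (fun v => if G.Adj x v ∧ ℓ v = VLabel.U then VLabel.C else ℓ v) (i - 1) := by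
  rw [card_filter_powerset_and_mem hx, dsCount_eq_card_filter_powerset (filter_subset _ _)]
  refine congrArg card (filter_congr fun D hD => ?_)
  have hxD : x ∉ D := fun h => notMem_erase x W (mem_powerset.mp hD h)
  rw [IsLDomSet.insert_iff hx hℓx hxD, card_insert_of_notMem hxD]
  exact and_congr_right fun _ => by omega

open Classical in
lemma dsCount_erase_eq (hx : x ∈ W) (hℓx : ℓ x ≠ VLabel.C) :
    dsCount G (W.erase x) ℓ i =
      #{D ∈ W.powerset | (IsLDomSet G W ℓ D ∧ #D = i) ∧ x ∉ D} +
        dsCount G ((W.erase x).filter fun v => ¬(G.Adj x v ∧ ℓ v = VLabel.C))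
          (fun v => if G.Adj x v then VLabel.N else ℓ v) i := by
  rw [dsCount_eq_card_filter_powerset (erase_subset x W),
    dsCount_eq_card_filter_powerset ((filter_subset _ _).trans (erase_subset x W)),
    ← card_filter_add_card_filter_not (fun D => ∃ u ∈ D, G.Adj u x), filter_filter, filter_filter]
  congr 2
  · refine filter_congr fun D _ => ?_
    rw [and_right_comm, ← IsLDomSet.notMem_and_iff hx hℓx]
    tauto
  · refine filter_congr fun D _ => ?_
    rw [and_right_comm, IsLDomSet.and_not_adj_iff]

end Counting

theorem stmt_11_general {V : Type*} [DecidableEq V] (G : SimpleGraph V)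
    [DecidableRel G.Adj]
    (W : Finset V) (ℓ : V → VLabel) (x : V) (hx : x ∈ W) (hℓx : ℓ x = VLabel.U)
    (i : ℕ) (hi : 1 ≤ i) :
    (dsCount G W ℓ i : ℤ) =
      (dsCount G ((W.erase x).filter (fun v => ¬(G.Adj x v ∧ ℓ v = VLabel.N)))
        (fun v => if G.Adj x v ∧ ℓ v = VLabel.U then VLabel.C else ℓ v) (i - 1) : ℤ)
      + (dsCount G (W.erase x) ℓ i : ℤ)
      - (dsCount G ((W.erase x).filter (fun v => ¬(G.Adj x v ∧ ℓ v = VLabel.C)))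
        (fun v => if G.Adj x v then VLabel.N else ℓ v) i : ℤ) := by
  classical
  rw [← card_filter_isLDomSet_and_mem hx (by simp [hℓx]) hi,
    dsCount_erase_eq hx (by simp [hℓx]),
    dsCount_eq_card_filter_powerset subset_rfl,
    ← card_filter_add_card_filter_not (fun D => x ∈ D), filter_filter, filter_filter]
  push_cast
  ring

theorem stmt_11 {V : Type*} [Fintype V] [DecidableEq V] (G : SimpleGraph V)
    [DecidableRel G.Adj]
    (W : Finset V) (ℓ : V → VLabel) (x : V) (hx : x ∈ W) (hℓx : ℓ x = VLabel.U)
    (hdeg : ((W.erase x).filter (fun v => G.Adj x v)).card = 3)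
    (i : ℕ) (hi : 1 ≤ i) :
    (dsCount G W ℓ i : ℤ) =
      (dsCount G ((W.erase x).filter (fun v => ¬(G.Adj x v ∧ ℓ v = VLabel.N)))
        (fun v => if G.Adj x v ∧ ℓ v = VLabel.U then VLabel.C else ℓ v) (i - 1) : ℤ)
      + (dsCount G (W.erase x) ℓ i : ℤ)
      - (dsCount G ((W.erase x).filter (fun v => ¬(G.Adj x v ∧ ℓ v = VLabel.C)))
        (fun v => if G.Adj x v then VLabel.N else ℓ v) i : ℤ) :=
  stmt_11_general G W ℓ x hx hℓx i hi
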